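/- arXiv:math/0512329 — 3 statements merged into one kernel-verified Lean document; each statement's English description precedes it below -/
import Mathlib

section
/- Let R be a positively graded finitely generated algebra over a field K with R_0 = K, let π be a positive integer, and let p_1, ..., p_r be homogeneous prime ideals of R. Let S be the set of homogeneous elements x of R with gcd(deg x, π) = 1, and let I be the ideal generated by S. If I ⊄ p_i for every i, then S ⊄ p_1 ∪ ... ∪ p_r, i.e. there exists a homogeneous element x ∈ I with gcd(deg x, π) = 1 lying outside every p_i. -/
/-!
Induct on the set of primes. If one prime is contained in another, avoiding the larger one
suffices. Otherwise, given `x ∈ S` avoiding all primes but `P`, with `x ∈ P`, build `y ∈ S`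
lying in every other prime but not in `P`: a product of homogeneous witnesses of `Q ⊄ P`,
times a power of some element of `S \ P` that corrects the degree to be coprime to `π`.
Then `x ^ a + y ^ b`, with `a, b` chosen so that both summands have degree `deg x * deg y`,
lies in `S` and avoids every prime.
-/

open Finset

theorem Nat.exists_coprime_add_mul {π d : ℕ} (hπ : π ≠ 0) (hd : d.Coprime π) (D : ℕ) :
    ∃ m, (D + m * d).Coprime π := by
  have : NeZero π := ⟨hπ⟩
  refine ⟨((1 - D) * (d : ZMod π)⁻¹ : ZMod π).val, ?_⟩
  rw [← ZMod.isUnit_iff_coprime]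
  push_cast
  rw [ZMod.natCast_zmod_val, mul_assoc, mul_comm _ (d : ZMod π), ZMod.coe_mul_inv_eq_one d hd,
    mul_one, add_sub_cancel]
  exact isUnit_one

theorem Ideal.IsPrime.pow_add_pow_notMem {R : Type*} [CommRing R] {P : Ideal R} (hP : P.IsPrime)
    {a b : R} (ha : a ∈ P) (hb : b ∉ P) {n : ℕ} (hn : n ≠ 0) (m : ℕ) : a ^ n + b ^ m ∉ P := by
  intro h
  have hbm : b ^ m ∈ P := by
    simpa using P.sub_mem h (P.pow_mem_of_mem ha n (Nat.pos_of_ne_zero hn))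
  exact hb (hP.mem_of_pow_mem m hbm)

theorem Ideal.IsHomogeneous.exists_homogeneous_mem_notMem {ι σ A : Type*} [Semiring A]
    [SetLike σ A] [AddSubmonoidClass σ A] {𝒜 : ι → σ} [DecidableEq ι] [AddMonoid ι]
    [GradedRing 𝒜] {I J : Ideal A} (hI : I.IsHomogeneous 𝒜) (h : ¬ I ≤ J) :
    ∃ n, ∃ u ∈ 𝒜 n, u ∈ I ∧ u ∉ J := by
  contrapose! h
  rw [← hI.toIdeal_homogeneousCore_eq_self]
  refine Ideal.span_le.2 ?_
  rintro _ ⟨⟨u, n, hu⟩, huI, rfl⟩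
  exact h n u hu huI

section GradedAlgebra

variable {K R : Type*} [CommSemiring K] [CommRing R] [Algebra K R]
  (𝒜 : ℕ → Submodule K R) [GradedAlgebra 𝒜]

def homogeneousOfCoprimeDegree (π : ℕ) : Set R := {x | ∃ d, d.Coprime π ∧ x ∈ 𝒜 d}

variable {𝒜}

theorem exists_homogeneous_notMem_forall_mem {P : Ideal R} (hP : P.IsPrime)
    (s : Finset (Ideal R)) (hs : ∀ Q ∈ s, Q.IsHomogeneous 𝒜 ∧ ¬ Q ≤ P) :
    ∃ D, ∃ U ∈ 𝒜 D, U ∉ P ∧ ∀ Q ∈ s, U ∈ Q := by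
  induction s using Finset.induction_on with
  | empty => exact ⟨0, 1, SetLike.GradedOne.one_mem, P.one_notMem, by simp⟩
  | insert Q s _ ih =>
    rw [forall_mem_insert] at hs
    obtain ⟨D, U, hU, hUP, hUs⟩ := ih hs.2
    obtain ⟨n, u, hu, huQ, huP⟩ := hs.1.1.exists_homogeneous_mem_notMem hs.1.2
    refine ⟨n + D, u * U, SetLike.mul_mem_graded hu hU, hP.mul_notMem huP hUP, ?_⟩
    rw [forall_mem_insert]
    exact ⟨Q.mul_mem_right U huQ, fun Q' hQ' => Q'.mul_mem_left u (hUs Q' hQ')⟩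

theorem exists_mem_homogeneousOfCoprimeDegree_notMem_forall_mem {π : ℕ} (hπ : π ≠ 0)
    {P : Ideal R} (hP : P.IsPrime) (hSP : ¬ homogeneousOfCoprimeDegree 𝒜 π ⊆ P)
    (s : Finset (Ideal R)) (hs : ∀ Q ∈ s, Q.IsHomogeneous 𝒜 ∧ ¬ Q ≤ P) :
    ∃ y ∈ homogeneousOfCoprimeDegree 𝒜 π, y ∉ P ∧ ∀ Q ∈ s, y ∈ Q := by
  obtain ⟨D, U, hU, hUP, hUs⟩ := exists_homogeneous_notMem_forall_mem hP s hs
  obtain ⟨t, ⟨d, hd, ht⟩, htP⟩ := Set.not_subset.mp hSP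
  obtain ⟨m, hm⟩ := Nat.exists_coprime_add_mul hπ hd D
  refine ⟨U * t ^ m, ⟨D + m * d, hm, ?_⟩, hP.mul_notMem hUP fun h => htP (hP.mem_of_pow_mem m h),
    fun Q hQ => Q.mul_mem_right _ (hUs Q hQ)⟩
  simpa only [smul_eq_mul] using SetLike.mul_mem_graded hU (SetLike.pow_mem_graded m ht)

theorem exists_pow_add_pow_mem_homogeneousOfCoprimeDegree {π : ℕ} (hπ : π ≠ 1) {x y : R}
    (hx : x ∈ homogeneousOfCoprimeDegree 𝒜 π) (hy : y ∈ homogeneousOfCoprimeDegree 𝒜 π) :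
    ∃ a b, a ≠ 0 ∧ b ≠ 0 ∧ x ^ a + y ^ b ∈ homogeneousOfCoprimeDegree 𝒜 π := by
  obtain ⟨e, he, hxe⟩ := hx
  obtain ⟨f, hf, hyf⟩ := hy
  have hne : ∀ {d : ℕ}, d.Coprime π → d ≠ 0 := fun hd h0 => hπ ((Nat.coprime_zero_left π).1 (h0 ▸ hd))
  refine ⟨f, e, hne hf, hne he, f * e, hf.mul_left he, Submodule.add_mem _ ?_ ?_⟩
  · simpa only [smul_eq_mul] using SetLike.pow_mem_graded f hxe
  · simpa only [smul_eq_mul, mul_comm] using SetLike.pow_mem_graded e hyf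

theorem exists_mem_homogeneousOfCoprimeDegree_forall_notMem {π : ℕ} (hπ : 1 < π)
    (s : Finset (Ideal R))
    (hs : ∀ P ∈ s, P.IsPrime ∧ P.IsHomogeneous 𝒜 ∧ ¬ homogeneousOfCoprimeDegree 𝒜 π ⊆ P) :
    ∃ x ∈ homogeneousOfCoprimeDegree 𝒜 π, ∀ P ∈ s, x ∉ P := by
  induction s using Finset.strongInduction with
  | H s ih =>
    by_cases hle : ∃ Q ∈ s, ∃ P ∈ s, Q ≠ P ∧ Q ≤ P
    · obtain ⟨Q, hQ, P, hP, hQP, hle⟩ := hle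
      obtain ⟨x, hx, hxs⟩ := ih (s.erase Q) (erase_ssubset hQ)
        fun P' hP' => hs P' (mem_of_mem_erase hP')
      refine ⟨x, hx, ?_⟩
      rw [← insert_erase hQ, forall_mem_insert]
      exact ⟨fun h => hxs P (mem_erase.2 ⟨hQP.symm, hP⟩) (hle h), hxs⟩
    push Not at hle
    rcases s.eq_empty_or_nonempty with rfl | ⟨P, hP⟩
    · exact ⟨0, ⟨1, Nat.coprime_one_left π, zero_mem _⟩, by simp⟩
    obtain ⟨hPprime, -, hSP⟩ := hs P hP
    obtain ⟨x, hx, hxs⟩ := ih (s.erase P) (erase_ssubset hP)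
      fun Q hQ => hs Q (mem_of_mem_erase hQ)
    rw [← insert_erase hP]
    by_cases hxP : x ∈ P
    swap
    · exact ⟨x, hx, (forall_mem_insert _ _ _).2 ⟨hxP, hxs⟩⟩
    obtain ⟨y, hy, hyP, hys⟩ := exists_mem_homogeneousOfCoprimeDegree_notMem_forall_mem
      (by omega) hPprime hSP (s.erase P) fun Q hQ =>
        ⟨(hs Q (mem_of_mem_erase hQ)).2.1,
          hle Q (mem_of_mem_erase hQ) P hP (ne_of_mem_erase hQ)⟩
    obtain ⟨a, b, ha, hb, hab⟩ := exists_pow_add_pow_mem_homogeneousOfCoprimeDegree hπ.ne' hx hy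
    refine ⟨x ^ a + y ^ b, hab, ?_⟩
    rw [forall_mem_insert]
    refine ⟨hPprime.pow_add_pow_notMem hxP hyP ha b, fun Q hQ => ?_⟩
    rw [add_comm]
    exact (hs Q (mem_of_mem_erase hQ)).1.pow_add_pow_notMem (hys Q hQ) (hxs Q hQ) hb a

end GradedAlgebra

theorem stmt4_general (K : Type*) [Field K] (R : Type*) [CommRing R] [Algebra K R]
    (𝒜 : ℕ → Submodule K R) [GradedAlgebra 𝒜]
    (π : ℕ) (hπ : 0 < π)
    (r : ℕ) (p : Fin r → Ideal R)
    (hprime : ∀ i, (p i).IsPrime)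
    (hhom : ∀ i, Ideal.IsHomogeneous 𝒜 (p i))
    (S : Set R) (hS : S = {x : R | ∃ d : ℕ, Nat.Coprime d π ∧ x ∈ 𝒜 d})
    (I : Ideal R) (hI : I = Ideal.span S)
    (havoid : ∀ i, ¬ I ≤ p i) :
    ∃ x ∈ S, x ∈ I ∧ ∀ i, x ∉ p i := by
  change S = homogeneousOfCoprimeDegree 𝒜 π at hS
  subst hS hI
  suffices ∃ x ∈ homogeneousOfCoprimeDegree 𝒜 π, ∀ i, x ∉ p i by
    obtain ⟨x, hx, hxp⟩ := this
    exact ⟨x, hx, Ideal.subset_span hx, hxp⟩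
  obtain hπ1 | rfl : 1 < π ∨ π = 1 := by omega
  · obtain ⟨x, hx, hxp⟩ := exists_mem_homogeneousOfCoprimeDegree_forall_notMem hπ1
      (univ.image p) (by simpa using fun i => ⟨hprime i, hhom i, fun h => havoid i (Ideal.span_le.2 h)⟩)
    exact ⟨x, hx, fun i => hxp (p i) (mem_image_of_mem p (mem_univ i))⟩
  · exact ⟨1, ⟨0, Nat.coprime_zero_left 1 |>.2 rfl, SetLike.GradedOne.one_mem⟩,
      fun i => (p i).one_notMem⟩

/-- Prime avoidance for homogeneous elements of degree coprime to `π`.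
Let `R` be a positively graded finitely generated `K`-algebra with `R₀ = K`, `π > 0`,
and `p₁, …, p_r` homogeneous prime ideals. Let `S` be the set of homogeneous elements
of degree coprime to `π` and `I` the ideal generated by `S`. If `I ⊄ pᵢ` for all `i`,
then there is `x ∈ S ⊆ I` lying outside every `pᵢ`. -/
theorem stmt4 (K : Type*) [Field K] (R : Type*) [CommRing R] [Algebra K R]
    (𝒜 : ℕ → Submodule K R) [GradedAlgebra 𝒜]
    (hR0 : 𝒜 0 = Submodule.span K {(1 : R)})
    (hfg : Algebra.FiniteType K R)
    (π : ℕ) (hπ : 0 < π)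
    (r : ℕ) (p : Fin r → Ideal R)
    (hprime : ∀ i, (p i).IsPrime)
    (hhom : ∀ i, Ideal.IsHomogeneous 𝒜 (p i))
    (S : Set R) (hS : S = {x : R | ∃ d : ℕ, Nat.Coprime d π ∧ x ∈ 𝒜 d})
    (I : Ideal R) (hI : I = Ideal.span S)
    (havoid : ∀ i, ¬ I ≤ p i) :
    ∃ x ∈ S, x ∈ I ∧ ∀ i, x ∉ p i :=
  stmt4_general K R 𝒜 π hπ r p hprime hhom S hS I hI havoid
end

section
/- Let K be a field and R a polynomial ring K[r_1, ..., r_d] graded by assigning positive degrees deg r_i, and let p = lcm(deg r_1, ..., deg r_d). Let S be the K-subalgebra of R generated by all homogeneous elements of degree p. Then R is a finitely generated S-module. -/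
/-!
Each variable `X i` has weight dividing `p`, so `X i ^ (p / w i)` is homogeneous of degree `p` and
lies in `S`: every `X i` is integral over `S`. Since the `X i` generate `R` as an algebra, `R` is a
finitely generated `S`-algebra that is integral over `S`, hence a finite `S`-module.
-/

open MvPolynomial

theorem Algebra.isIntegral_of_adjoin_eq_top {K S A : Type*} [CommRing K] [CommRing S] [CommRing A]
    [Algebra K S] [Algebra K A] [Algebra S A] [IsScalarTower K S A] {s : Set A}
    (hs : Algebra.adjoin K s = ⊤) (hint : ∀ x ∈ s, IsIntegral S x) : Algebra.IsIntegral S A := by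
  have hle : (⊤ : Subalgebra K A) ≤ (integralClosure S A).restrictScalars K :=
    hs ▸ Algebra.adjoin_le hint
  exact ⟨fun x => hle Algebra.mem_top⟩

theorem MvPolynomial.isWeightedHomogeneous_X_pow_div {R σ : Type*} [CommSemiring R] (w : σ → ℕ)
    {i : σ} {p : ℕ} (hdvd : w i ∣ p) :
    IsWeightedHomogeneous w (X i ^ (p / w i) : MvPolynomial σ R) p := by
  simpa [Nat.div_mul_cancel hdvd] using (isWeightedHomogeneous_X R w i).pow (p / w i)

/-- Let `R = K[r₁,…,r_d]` be a polynomial ring graded by positive degrees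
`deg rᵢ = w i`, `p = lcm(deg r₁,…,deg r_d)`, and `S` the `K`-subalgebra generated by the
homogeneous elements of degree `p`. Then `R` is a finitely generated `S`-module. -/
theorem stmt12 (K : Type*) [Field K] (d : ℕ) (w : Fin d → ℕ) (hw : ∀ i, 0 < w i)
    (p : ℕ) (hp : p = Finset.univ.lcm w)
    (S : Subalgebra K (MvPolynomial (Fin d) K))
    (hS : S = Algebra.adjoin K
      ((weightedHomogeneousSubmodule K w p : Submodule K (MvPolynomial (Fin d) K)) :
        Set (MvPolynomial (Fin d) K))) :
    Module.Finite S (MvPolynomial (Fin d) K) := by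
  have hp0 : 0 < p := Nat.pos_of_ne_zero <| hp ▸ Finset.lcm_ne_zero_iff.2 fun i _ => (hw i).ne'
  have hint (i : Fin d) : IsIntegral S (X i : MvPolynomial (Fin d) K) := by
    have hdvd : w i ∣ p := hp ▸ Finset.dvd_lcm (Finset.mem_univ i)
    have hmem : (X i : MvPolynomial (Fin d) K) ^ (p / w i) ∈ S :=
      hS ▸ Algebra.subset_adjoin (isWeightedHomogeneous_X_pow_div w hdvd)
    exact .of_pow (Nat.div_pos (Nat.le_of_dvd hp0 hdvd) (hw i))
      (isIntegral_algebraMap (x := (⟨_, hmem⟩ : S)))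
  have := Algebra.isIntegral_of_adjoin_eq_top (adjoin_range_X (R := K))
    (Set.forall_mem_range.2 hint)
  have := Algebra.FiniteType.of_restrictScalars_finiteType K S (MvPolynomial (Fin d) K)
  exact Algebra.IsIntegral.finite
end

section
/- Let P ⊂ ℝ^m be a rational polytope and F a face of P whose affine span contains a point with integer coordinates. Then for all sufficiently large positive integers n, the dilate nF contains a point with integer coordinates. -/
/-!
An exposed face `F` of the rational polytope is the convex hull of the rational vertices it
contains, so its centroid `b` is rational, with `D • b` integral for some `D > 0`, and every point
of the affine span of `F` close enough to `b` on the segment towards it lies in `F`. Given an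
integer point `x` of that span, write `n = q D + r` with `0 ≤ r < D`: then the integer point
`q (D • b) + r x = n • lineMap b x (r / n)` lies in `n F` as soon as `D / n` is small.
-/

open Set AffineMap Filter Pointwise

section Faces

variable {E : Type*} [AddCommGroup E] [Module ℝ E] [TopologicalSpace E] [T2Space E]
  [IsTopologicalAddGroup E] [ContinuousSMul ℝ E] [LocallyConvexSpace ℝ E]

/-- By Krein–Milman, the compact face `F` is the closed convex hull of its extreme points, and
these are vertices of the polytope. -/
theorem IsExposed.eq_convexHull_inter {s F : Set E} (hs : s.Finite)
    (hF : IsExposed ℝ (convexHull ℝ s) F) : F = convexHull ℝ (s ∩ F) := by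
  have hFconv : Convex ℝ F := hF.convex (convex_convexHull ℝ s)
  refine subset_antisymm ?_ (convexHull_min inter_subset_right hFconv)
  have hext : F.extremePoints ℝ ⊆ s ∩ F := fun x hx =>
    ⟨extremePoints_convexHull_subset (hF.isExtreme.extremePoints_subset_extremePoints hx),
      hx.1⟩
  calc F = closure (convexHull ℝ (F.extremePoints ℝ)) :=
        (closure_convexHull_extremePoints (hF.isCompact (hs.isCompact_convexHull ℝ))
          hFconv).symm
    _ ⊆ closure (convexHull ℝ (s ∩ F)) := closure_mono (convexHull_mono hext)
    _ = convexHull ℝ (s ∩ F) := ((hs.subset inter_subset_left).isClosed_convexHull ℝ).closure_eq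

end Faces

theorem exists_lineMap_centroid_mem_convexHull {E ι : Type*} [AddCommGroup E] [Module ℝ E]
    [Fintype ι] [Nonempty ι] {p : ι → E} {x : E} (hx : x ∈ affineSpan ℝ (range p)) :
    ∃ ε > 0, ∀ t ∈ Icc (0 : ℝ) ε,
      lineMap (Finset.univ.centroid ℝ p) x t ∈ convexHull ℝ (range p) := by
  obtain ⟨w, hw1, rfl⟩ := eq_affineCombination_of_mem_affineSpan_of_fintype hx
  set k : ℝ := (Fintype.card ι : ℝ)
  have hk : 0 < k := Nat.cast_pos.2 Fintype.card_pos
  set W := ∑ i, |w i|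
  have hW : 0 ≤ W := Finset.sum_nonneg fun i _ => abs_nonneg _
  -- the weights `(1 - t) / k + t * w i` of `lineMap` stay nonnegative while `t * (1 + k * W) ≤ 1`
  refine ⟨1 / (1 + k * W), by positivity, fun t ⟨ht0, htε⟩ => ?_⟩
  rw [Finset.centroid_def, Finset.lineMap_affineCombination]
  have hweight : ∀ i, lineMap (Finset.univ.centroidWeights ℝ) w t i = (1 - t) / k + t * w i := by
    intro i
    simp only [lineMap_apply_module, Pi.add_apply, Pi.smul_apply, Finset.centroidWeights_apply,
      Finset.card_univ, smul_eq_mul, k]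
    ring
  refine affineCombination_mem_convexHull (fun i _ => ?_) ?_
  · have htW : t * W ≤ (1 - t) / k := by
      rw [le_div_iff₀ hk]
      rw [le_div_iff₀ (by positivity)] at htε
      nlinarith
    have hwi : -W ≤ w i := (neg_le_neg (Finset.single_le_sum (f := fun i => |w i|)
      (fun i _ => abs_nonneg _) (Finset.mem_univ i))).trans (neg_abs_le _)
    rw [hweight]
    nlinarith
  · simp only [hweight, Finset.sum_add_distrib, ← Finset.mul_sum, hw1, Finset.sum_const,
      Finset.card_univ, nsmul_eq_mul]
    field_simp
    ring

theorem exists_pos_nat_mul_eq_int {ι : Type*} [Fintype ι] {x : ι → ℝ}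
    (hx : ∀ i, ∃ q : ℚ, x i = q) : ∃ D : ℕ, 0 < D ∧ ∀ i, ∃ z : ℤ, D * x i = z := by
  choose q hq using hx
  refine ⟨∏ i, (q i).den, Finset.prod_pos fun i _ => (q i).pos, fun i => ?_⟩
  obtain ⟨c, hc⟩ := Finset.dvd_prod_of_mem (fun i => (q i).den) (Finset.mem_univ i)
  refine ⟨c * (q i).num, ?_⟩
  have hnum : ((q i).num : ℝ) = q i * (q i).den := by exact_mod_cast (Rat.mul_den_eq_num _).symm
  rw [hc, hq]
  push_cast
  rw [hnum]
  ring

theorem eventually_exists_int_mem_smul {ι : Type*} {C : Set (ι → ℝ)} {b x : ι → ℝ} {D : ℕ}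
    (hD : 0 < D) (hb : ∀ i, ∃ z : ℤ, D * b i = z) (hx : ∀ i, ∃ z : ℤ, x i = z) {ε : ℝ}
    (hε : 0 < ε) (hC : ∀ t ∈ Icc (0 : ℝ) ε, lineMap b x t ∈ C) :
    ∀ᶠ n : ℕ in atTop, ∃ y : ι → ℤ, (fun i => (y i : ℝ)) ∈ (n : ℝ) • C := by
  choose zb hzb using hb
  choose zx hzx using hx
  filter_upwards [eventually_gt_atTop ⌈D / ε⌉₊] with n hn
  have hn0 : (0 : ℝ) < n := by exact_mod_cast (Nat.zero_le _).trans_lt hn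
  have hDn : D / ε < n := (Nat.le_ceil _).trans_lt (by exact_mod_cast hn)
  refine ⟨fun i => ((n / D : ℕ) : ℤ) * zb i + ((n % D : ℕ) : ℤ) * zx i,
    lineMap b x (((n % D : ℕ) : ℝ) / n), ?_, ?_⟩
  · apply hC
    refine ⟨by positivity, ?_⟩
    rw [div_le_iff₀ hn0]
    rw [div_lt_iff₀ hε] at hDn
    have : ((n % D : ℕ) : ℝ) ≤ D := by exact_mod_cast (Nat.mod_lt n hD).le
    nlinarith
  · funext i
    have hsplit : (D : ℝ) * (n / D : ℕ) + (n % D : ℕ) = n := by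
      exact_mod_cast Nat.div_add_mod n D
    simp only [lineMap_apply_module, Pi.smul_apply, Pi.add_apply, smul_eq_mul, Int.cast_add,
      Int.cast_mul, Int.cast_natCast, ← hzb, ← hzx]
    field_simp
    linear_combination -b i * hsplit

open Pointwise in
theorem stmt16_general (m : ℕ) (V : Finset (Fin m → ℚ))
    (P : Set (Fin m → ℝ))
    (hP : P = convexHull ℝ ((fun v : Fin m → ℚ => fun i => ((v i : ℝ))) '' V))
    (F : Set (Fin m → ℝ)) (hF : IsExposed ℝ P F) (hFne : F.Nonempty)
    (hint : ∃ x : Fin m → ℝ, x ∈ affineSpan ℝ F ∧ ∀ i, ∃ z : ℤ, x i = z) :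
    ∃ N : ℕ, ∀ n : ℕ, N ≤ n → ∃ y : Fin m → ℤ,
      (fun i => ((y i : ℝ))) ∈ (n : ℝ) • F := by
  classical
  set e : (Fin m → ℚ) → Fin m → ℝ := fun v i => (v i : ℝ)
  set S := V.filter (fun v => e v ∈ F)
  have hrange : range (fun v : S => e v) = e '' V ∩ F := by
    ext y
    simp only [S, mem_range, Subtype.exists, Finset.mem_filter, exists_prop, mem_inter_iff,
      mem_image, Finset.mem_coe]
    grind
  have hFeq : F = convexHull ℝ (range fun v : S => e v) :=
    hrange ▸ (hP ▸ hF).eq_convexHull_inter (V.finite_toSet.image e)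
  have : Nonempty S := by
    obtain ⟨_, ⟨v, -⟩⟩ := convexHull_nonempty_iff.1 (hFeq ▸ hFne)
    exact ⟨v⟩
  obtain ⟨x, hxF, hxint⟩ := hint
  rw [hFeq, affineSpan_convexHull] at hxF
  obtain ⟨ε, hε, hC⟩ := exists_lineMap_centroid_mem_convexHull hxF
  have hrat : ∀ i, ∃ q : ℚ, Finset.univ.centroid ℝ (fun v : S => e v) i = q := fun i =>
    ⟨∑ v : S, (Fintype.card S : ℚ)⁻¹ * v.1 i, by
      rw [Finset.centroid_def, Finset.affineCombination_eq_linear_combination _ _ _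
        (Finset.sum_centroidWeights_eq_one_of_nonempty ℝ _ Finset.univ_nonempty)]
      simp [Finset.centroidWeights_apply, e]⟩
  obtain ⟨D, hD, hDb⟩ := exists_pos_nat_mul_eq_int hrat
  rw [hFeq]
  exact eventually_atTop.1 (eventually_exists_int_mem_smul hD hDb hxint hε hC)

open Pointwise in
/-- Let `P ⊂ ℝ^m` be a rational polytope and `F` a face of `P` whose
affine span contains an integer point. Then for all sufficiently large `n`, the dilate
`nF` contains an integer point. -/
theorem stmt16 (m : ℕ) (V : Finset (Fin m → ℚ)) (hV : V.Nonempty)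
    (P : Set (Fin m → ℝ))
    (hP : P = convexHull ℝ ((fun v : Fin m → ℚ => fun i => ((v i : ℝ))) '' V))
    (F : Set (Fin m → ℝ)) (hF : IsExposed ℝ P F) (hFne : F.Nonempty)
    (hint : ∃ x : Fin m → ℝ, x ∈ affineSpan ℝ F ∧ ∀ i, ∃ z : ℤ, x i = z) :
    ∃ N : ℕ, ∀ n : ℕ, N ≤ n → ∃ y : Fin m → ℤ,
      (fun i => ((y i : ℝ))) ∈ (n : ℝ) • F :=
  stmt16_general m V P hP F hF hFne hint
end
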